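/- arXiv:2005.14660 — 4 statements merged into one kernel-verified Lean document; each statement's English description precedes it below -/
import Mathlib

section
/- For all t, s ∈ (0,∞) with t ≠ s, the partial derivative of G with respect to its first variable satisfies |∂G/∂t (t,s)| ≤ (c/p(t))·G(s,s), where c := max{a₁,a₂}/min{b₁,b₂}. -/
open MeasureTheory Set Filter Topology

/-!
Off the diagonal, `τ ↦ G τ s` is `θ τ · φ s / D` for `τ < s` and `θ s · φ τ / D` for `τ > s`,
so `∂ₜG(t, s)` is `a₁ φ(s) / (D p(t))` or `-a₂ θ(s) / (D p(t))`. As `θ ≥ b₁` and `φ ≥ b₂`,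
each of `a₁, a₂` is at most `max a₁ a₂ = c · min b₁ b₂ ≤ c θ(s), c φ(s)`, whence
`|∂ₜG(t, s)| ≤ c θ(s) φ(s) / (D p(t)) = c G(s, s) / p(t)`.
-/

section Primitive

variable {E : Type*} [NormedAddCommGroup E] [NormedSpace ℝ E] [CompleteSpace E]
  {f : ℝ → E} {a t : ℝ}

theorem hasDerivAt_intervalIntegral_of_integrableOn_Ici (hf : IntegrableOn f (Ici a))
    (hat : a < t) (hft : ContinuousAt f t) :
    HasDerivAt (fun τ => ∫ σ in a..τ, f σ) (f t) t :=
  intervalIntegral.integral_hasDerivAt_right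
    (hf.mono_set (by rw [uIcc_of_le hat.le]; exact Icc_subset_Ici_self)).intervalIntegrable
    (AEStronglyMeasurable.stronglyMeasurableAtFilter_of_mem hf.aestronglyMeasurable
      (Ici_mem_nhds hat)) hft

theorem hasDerivAt_integral_Ici (hf : IntegrableOn f (Ici a)) (hat : a < t)
    (hft : ContinuousAt f t) :
    HasDerivAt (fun τ => ∫ σ in Ici τ, f σ) (-f t) t := by
  have hf' : IntegrableOn f (Ioi a) := hf.mono_set Ioi_subset_Ici_self
  have htail : (fun τ => (∫ σ in Ioi a, f σ) - ∫ σ in a..τ, f σ) =ᶠ[𝓝 t]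
      fun τ => ∫ σ in Ici τ, f σ := by
    filter_upwards [Ioi_mem_nhds hat] with τ hτ
    rw [← intervalIntegral.integral_Ioi_sub_Ioi hf' hτ.le, sub_sub_cancel,
      integral_Ici_eq_integral_Ioi]
  exact ((hasDerivAt_intervalIntegral_of_integrableOn_Ici hf hat hft).const_sub _)
    |>.congr_of_eventuallyEq htail.symm

end Primitive

section GreenProduct

variable {θ φ : ℝ → ℝ} {θ' φ' D k s t g' : ℝ}

theorem HasDerivAt.mul_min_max_of_lt (hθ : HasDerivAt θ θ' t) (hts : t < s) :
    HasDerivAt (fun τ => θ (min τ s) * φ (max τ s)) (θ' * φ s) t := by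
  refine (hθ.mul_const (φ s)).congr_of_eventuallyEq ?_
  filter_upwards [Iio_mem_nhds hts] with τ hτ
  rw [min_eq_left hτ.le, max_eq_right hτ.le]

theorem HasDerivAt.mul_min_max_of_gt (hφ : HasDerivAt φ φ' t) (hst : s < t) :
    HasDerivAt (fun τ => θ (min τ s) * φ (max τ s)) (θ s * φ') t := by
  refine (hφ.const_mul (θ s)).congr_of_eventuallyEq ?_
  filter_upwards [Ioi_mem_nhds hst] with τ hτ
  rw [min_eq_right hτ.le, max_eq_left hτ.le]

theorem abs_deriv_green_le (hD : 0 < D) (hθ : HasDerivAt θ θ' t) (hφ : HasDerivAt φ φ' t)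
    (hθ' : |θ'| ≤ k * θ s) (hφ' : |φ'| ≤ k * φ s) (hθs : 0 ≤ θ s) (hφs : 0 ≤ φ s)
    (hts : t ≠ s) (hg : HasDerivAt (fun τ => 1 / D * (θ (min τ s) * φ (max τ s))) g' t) :
    |g'| ≤ k * (1 / D * (θ s * φ s)) := by
  have hD' : 0 ≤ 1 / D := by positivity
  rcases hts.lt_or_gt with hts | hst
  · rw [hg.unique ((hθ.mul_min_max_of_lt hts).const_mul _), abs_mul, abs_mul,
      abs_of_nonneg hD', abs_of_nonneg hφs]
    calc 1 / D * (|θ'| * φ s) ≤ 1 / D * (k * θ s * φ s) := by gcongr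
      _ = k * (1 / D * (θ s * φ s)) := by ring
  · rw [hg.unique ((hφ.mul_min_max_of_gt hst).const_mul _), abs_mul, abs_mul,
      abs_of_nonneg hD', abs_of_nonneg hθs]
    calc 1 / D * (θ s * |φ'|) ≤ 1 / D * (θ s * (k * φ s)) := by gcongr
      _ = k * (1 / D * (θ s * φ s)) := by ring

end GreenProduct

theorem abs_mul_one_div_le {a c x q : ℝ} (ha : 0 ≤ a) (hax : a ≤ c * x) (hq : 0 < q) :
    |a * (1 / q)| ≤ c / q * x := by
  rw [abs_of_nonneg (by positivity), mul_one_div, div_mul_eq_mul_div]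
  gcongr

theorem le_div_mul_of_le {a A m x : ℝ} (haA : a ≤ A) (hA : 0 ≤ A) (hm : 0 < m) (hmx : m ≤ x) :
    a ≤ A / m * x :=
  calc a ≤ A / m * m := by rwa [div_mul_cancel₀ A hm.ne']
    _ ≤ A / m * x := by gcongr

theorem stmt_7_general
    (p : ℝ → ℝ)
    (hp_cont : ContinuousOn p (Ici 0))
    (hp_pos : ∀ t ∈ Ici (0:ℝ), 0 < p t)
    (hp_int : IntegrableOn (fun s => 1 / p s) (Ici 0))
    (a₁ a₂ b₁ b₂ D : ℝ)
    (ha₁ : 0 ≤ a₁) (ha₂ : 0 ≤ a₂)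
    (hDpos : 0 < D)
    (θ φ : ℝ → ℝ)
    (hθ : ∀ t, θ t = b₁ + a₁ * ∫ σ in (0:ℝ)..t, 1 / p σ)
    (hφ : ∀ t, φ t = b₂ + a₂ * ∫ σ in Ici t, 1 / p σ)
    (G : ℝ → ℝ → ℝ)
    (hG : ∀ t s, G t s = (1 / D) * (θ (min t s) * φ (max t s)))
    (hb₁' : 0 < b₁) (hb₂' : 0 < b₂)
    (c : ℝ) (hc : c = max a₁ a₂ / min b₁ b₂)
    :
    ∀ t > 0, ∀ s > 0, t ≠ s → ∀ g', HasDerivAt (fun τ => G τ s) g' t →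
      |g'| ≤ c / p t * G s s
    := by
  intro t ht s hs hts g' hg'
  have hpt : 0 < p t := hp_pos t ht.le
  have hinv : ContinuousAt (fun σ => 1 / p σ) t :=
    continuousAt_const.div (hp_cont.continuousAt (Ici_mem_nhds ht)) hpt.ne'
  have hθ' : HasDerivAt θ (a₁ * (1 / p t)) t := by
    rw [funext hθ]
    exact ((hasDerivAt_intervalIntegral_of_integrableOn_Ici hp_int ht hinv).const_mul a₁)
      |>.const_add b₁
  have hφ' : HasDerivAt φ (a₂ * -(1 / p t)) t := by
    rw [funext hφ]
    exact ((hasDerivAt_integral_Ici hp_int ht hinv).const_mul a₂).const_add b₂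
  have hθs : min b₁ b₂ ≤ θ s := by
    have : 0 ≤ ∫ σ in (0:ℝ)..s, 1 / p σ :=
      intervalIntegral.integral_nonneg hs.le fun σ hσ => (one_div_pos.2 (hp_pos σ hσ.1)).le
    exact (min_le_left _ _).trans (hθ s ▸ le_add_of_nonneg_right (mul_nonneg ha₁ this))
  have hφs : min b₁ b₂ ≤ φ s := by
    have : 0 ≤ ∫ σ in Ici s, 1 / p σ :=
      setIntegral_nonneg measurableSet_Ici fun σ hσ =>
        (one_div_pos.2 (hp_pos σ (hs.le.trans hσ))).le
    exact (min_le_right _ _).trans (hφ s ▸ le_add_of_nonneg_right (mul_nonneg ha₂ this))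
  have hmin : 0 < min b₁ b₂ := lt_min hb₁' hb₂'
  have hmax : 0 ≤ max a₁ a₂ := ha₁.trans (le_max_left _ _)
  rw [funext fun τ => hG τ s] at hg'
  rw [hG, min_self, max_self]
  refine abs_deriv_green_le hDpos hθ' hφ' ?_ ?_ (hmin.le.trans hθs) (hmin.le.trans hφs) hts hg'
  · exact abs_mul_one_div_le ha₁ (hc ▸ le_div_mul_of_le (le_max_left _ _) hmax hmin hθs) hpt
  · rw [mul_neg, abs_neg]
    exact abs_mul_one_div_le ha₂ (hc ▸ le_div_mul_of_le (le_max_right _ _) hmax hmin hφs) hpt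

theorem stmt_7
    (p : ℝ → ℝ)
    (hp_cont : ContinuousOn p (Ici 0))
    (hp_pos : ∀ t ∈ Ici (0:ℝ), 0 < p t)
    (hp_int : IntegrableOn (fun s => 1 / p s) (Ici 0))
    (a₁ a₂ b₁ b₂ D : ℝ)
    (ha₁ : 0 ≤ a₁) (ha₂ : 0 ≤ a₂) (hb₁ : 0 ≤ b₁) (hb₂ : 0 ≤ b₂)
    (hD : D = a₂ * b₁ + a₁ * b₂ + a₁ * a₂ * ∫ σ in Ici (0:ℝ), 1 / p σ)
    (hDpos : 0 < D)
    (θ φ : ℝ → ℝ)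
    (hθ : ∀ t, θ t = b₁ + a₁ * ∫ σ in (0:ℝ)..t, 1 / p σ)
    (hφ : ∀ t, φ t = b₂ + a₂ * ∫ σ in Ici t, 1 / p σ)
    (G : ℝ → ℝ → ℝ)
    (hG : ∀ t s, G t s = (1 / D) * (θ (min t s) * φ (max t s)))
    (hb₁' : 0 < b₁) (hb₂' : 0 < b₂)
    (c : ℝ) (hc : c = max a₁ a₂ / min b₁ b₂)
    :
    ∀ t > 0, ∀ s > 0, t ≠ s → ∀ g', HasDerivAt (fun τ => G τ s) g' t →
      |g'| ≤ c / p t * G s s :=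
  stmt_7_general p hp_cont hp_pos hp_int a₁ a₂ b₁ b₂ D ha₁ ha₂ hDpos θ φ hθ hφ G hG hb₁' hb₂' c hc
end

section
/- The function x(t) := ∫₀^∞ G(t,s)·p(s)·σ(s) ds satisfies the homogeneous boundary conditions of the problem: a₁·x(0) − b₁·lim_{t→0⁺} p(t)·x'(t) = 0 and a₂·lim_{t→∞} x(t) + b₂·lim_{t→∞} p(t)·x'(t) = 0, where x is differentiable on (0,∞) with p(t)·x'(t) = (1/D)·(a₁·∫ₜ^∞ φ(s)·p(s)·σ(s) ds − a₂·∫₀ᵗ θ(s)·p(s)·σ(s) ds). -/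
/-! Splitting the integral at `s = t` gives `D x(t) = φ(t) ∫₀ᵗ θ p q + θ(t) ∫ₜ^∞ φ p q`.
When differentiating, the two terms coming from the variable limits cancel, and `θ' = a₁ / p`,
`φ' = -a₂ / p` leave `p x' = (a₁ ∫ₜ^∞ φ p q - a₂ ∫₀ᵗ θ p q) / D`. The boundary conditions follow
by letting `t → 0⁺`, where `θ(0) = b₁`, and `t → ∞`, where `φ → b₂`. Both integrals converge
because `G(s, s) p q = θ φ p q / D` is integrable while `θ ≥ b₁ > 0` and `φ ≥ b₂ > 0`. -/

open MeasureTheory Set Filter Topology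

namespace MeasureTheory.IntegrableOn

variable {f : ℝ → ℝ} {a t : ℝ}

theorem continuousOn_primitive_Ici (hf : IntegrableOn f (Ici a)) :
    ContinuousOn (fun t => ∫ s in a..t, f s) (Ici a) := by
  have hg := hf.integrable_indicator measurableSet_Ici
  refine (intervalIntegral.continuous_primitive (fun _ _ => hg.intervalIntegrable) a).continuousOn
    |>.congr fun t ht => intervalIntegral.integral_congr fun s hs => ?_
  rw [uIcc_of_le ht] at hs
  exact (indicator_of_mem hs.1 f).symm

theorem setIntegral_Ici_eq_sub (hf : IntegrableOn f (Ici a)) (ht : a ≤ t) :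
    ∫ s in Ici t, f s = (∫ s in Ici a, f s) - ∫ s in a..t, f s := by
  rw [← intervalIntegral.integral_Ici_sub_Ici' hf (hf.mono_set (Ici_subset_Ici.2 ht)),
    sub_sub_cancel]

theorem continuousOn_setIntegral_Ici (hf : IntegrableOn f (Ici a)) :
    ContinuousOn (fun t => ∫ s in Ici t, f s) (Ici a) :=
  (continuousOn_const.sub hf.continuousOn_primitive_Ici).congr fun _ ht =>
    hf.setIntegral_Ici_eq_sub ht

theorem tendsto_primitive_nhdsGT (hf : IntegrableOn f (Ici a)) :
    Tendsto (fun t => ∫ s in a..t, f s) (𝓝[>] a) (𝓝 0) := by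
  simpa using (hf.continuousOn_primitive_Ici a self_mem_Ici).tendsto.mono_left
    (nhdsWithin_mono _ Ioi_subset_Ici_self)

theorem tendsto_setIntegral_Ici_nhdsGT (hf : IntegrableOn f (Ici a)) :
    Tendsto (fun t => ∫ s in Ici t, f s) (𝓝[>] a) (𝓝 (∫ s in Ici a, f s)) :=
  (hf.continuousOn_setIntegral_Ici a self_mem_Ici).tendsto.mono_left
    (nhdsWithin_mono _ Ioi_subset_Ici_self)

theorem tendsto_primitive_atTop (hf : IntegrableOn f (Ici a)) :
    Tendsto (fun t => ∫ s in a..t, f s) atTop (𝓝 (∫ s in Ici a, f s)) := by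
  rw [integral_Ici_eq_integral_Ioi]
  exact intervalIntegral_tendsto_integral_Ioi a (hf.mono_set Ioi_subset_Ici_self) tendsto_id

theorem hasDerivAt_primitive (hf : IntegrableOn f (Ici a)) (ht : a < t) (hft : ContinuousAt f t) :
    HasDerivAt (fun t => ∫ s in a..t, f s) (f t) t :=
  intervalIntegral.integral_hasDerivAt_right
    (hf.mono_set (by rw [uIcc_of_le ht.le]; exact Icc_subset_Ici_self)).intervalIntegrable
    ⟨Ici a, Ici_mem_nhds ht, hf.aestronglyMeasurable⟩ hft

theorem hasDerivAt_setIntegral_Ici (hf : IntegrableOn f (Ici a)) (ht : a < t)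
    (hft : ContinuousAt f t) : HasDerivAt (fun t => ∫ s in Ici t, f s) (-f t) t :=
  ((hf.hasDerivAt_primitive ht hft).const_sub _).congr_of_eventuallyEq <|
    eventually_of_mem (Ici_mem_nhds ht) fun _ hs => hf.setIntegral_Ici_eq_sub hs

end MeasureTheory.IntegrableOn

theorem MeasureTheory.IntegrableOn.of_mul_of_le {α : Type*} [MeasurableSpace α]
    [TopologicalSpace α] [OpensMeasurableSpace α] {μ : Measure α} {f g : α → ℝ} {S : Set α}
    {c : ℝ} (h : IntegrableOn (fun x => g x * f x) S μ) (hS : MeasurableSet S) (hc : 0 < c)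
    (hf : ContinuousOn f S) (hg : ∀ x ∈ S, c ≤ g x) : IntegrableOn f S μ := by
  refine (h.norm.const_mul c⁻¹).mono' (hf.aestronglyMeasurable hS)
    (ae_restrict_of_forall_mem hS fun x hx => ?_)
  rw [Real.norm_eq_abs, Real.norm_eq_abs, abs_mul, le_inv_mul_iff₀ hc]
  exact mul_le_mul_of_nonneg_right ((hg x hx).trans (le_abs_self _)) (abs_nonneg _)

section SeparableKernel

variable {u v w : ℝ → ℝ} {a t : ℝ}

theorem integral_Ici_min_max_mul (hu : IntegrableOn (fun s => u s * w s) (Ici a))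
    (hv : IntegrableOn (fun s => v s * w s) (Ici a)) (ht : a ≤ t) :
    ∫ s in Ici a, u (min t s) * v (max t s) * w s =
      v t * (∫ s in a..t, u s * w s) + u t * ∫ s in Ici t, v s * w s := by
  have hlow : EqOn (fun s => u (min t s) * v (max t s) * w s) (fun s => v t * (u s * w s))
      (Ico a t) := fun s hs => by
    simp only [min_eq_right hs.2.le, max_eq_left hs.2.le]; ring
  have hhigh : EqOn (fun s => u (min t s) * v (max t s) * w s) (fun s => u t * (v s * w s))
      (Ici t) := fun s hs => by
    simp only [min_eq_left (mem_Ici.1 hs), max_eq_right (mem_Ici.1 hs)]; ring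
  rw [← Ico_union_Ici_eq_Ici ht, setIntegral_union (by grind) measurableSet_Ici
      (IntegrableOn.congr_fun ((hu.mono_set Ico_subset_Ici_self).const_mul (v t)) hlow.symm
        measurableSet_Ico)
      (IntegrableOn.congr_fun ((hv.mono_set (Ici_subset_Ici.2 ht)).const_mul (u t)) hhigh.symm
        measurableSet_Ici),
    setIntegral_congr_fun measurableSet_Ico hlow, setIntegral_congr_fun measurableSet_Ici hhigh,
    integral_const_mul, integral_const_mul, intervalIntegral.integral_of_le ht,
    integral_Ico_eq_integral_Ioc]

theorem hasDerivAt_integral_Ici_min_max_mul (hu : IntegrableOn (fun s => u s * w s) (Ici a))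
    (hv : IntegrableOn (fun s => v s * w s) (Ici a)) (ht : a < t) {u' v' : ℝ}
    (hu' : HasDerivAt u u' t) (hv' : HasDerivAt v v' t) (hw : ContinuousAt w t) :
    HasDerivAt (fun t => ∫ s in Ici a, u (min t s) * v (max t s) * w s)
      (v' * (∫ s in a..t, u s * w s) + u' * ∫ s in Ici t, v s * w s) t := by
  have hK := (hv'.mul (hu.hasDerivAt_primitive ht (hu'.continuousAt.mul hw))).add
    (hu'.mul (hv.hasDerivAt_setIntegral_Ici ht (hv'.continuousAt.mul hw)))
  refine (hK.congr_of_eventuallyEq (eventually_of_mem (Ici_mem_nhds ht) fun s hs =>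
    integral_Ici_min_max_mul hu hv hs)).congr_deriv ?_
  ring

theorem tendsto_integral_Ici_min_max_mul (hu : IntegrableOn (fun s => u s * w s) (Ici a))
    (hv : IntegrableOn (fun s => v s * w s) (Ici a)) {U V : ℝ} (hU : Tendsto u atTop (𝓝 U))
    (hV : Tendsto v atTop (𝓝 V)) :
    Tendsto (fun t => ∫ s in Ici a, u (min t s) * v (max t s) * w s) atTop
      (𝓝 (V * ∫ s in Ici a, u s * w s)) := by
  have hK := (hV.mul hu.tendsto_primitive_atTop).add (hU.mul
    (tendsto_integral_Ici_zero (f := fun s => v s * w s) (μ := volume) tendsto_id))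
  rw [mul_zero, add_zero] at hK
  exact hK.congr' <| (eventually_ge_atTop a).mono fun t ht =>
    (integral_Ici_min_max_mul hu hv ht).symm

end SeparableKernel

section AffinePrimitive

variable {g : ℝ → ℝ} {a b c : ℝ}

theorem properties_of_eq_const_add_mul_primitive {u : ℝ → ℝ} (hg : IntegrableOn g (Ici a))
    (hg_cont : ContinuousOn g (Ici a)) (hg_nonneg : ∀ s ∈ Ici a, 0 ≤ g s) (hc : 0 ≤ c)
    (hu : ∀ t, u t = b + c * ∫ s in a..t, g s) :
    ContinuousOn u (Ici a) ∧ (∀ t ∈ Ici a, b ≤ u t) ∧ (∀ t > a, HasDerivAt u (c * g t) t) ∧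
      Tendsto u atTop (𝓝 (b + c * ∫ s in Ici a, g s)) := by
  obtain rfl : u = fun t => b + c * ∫ s in a..t, g s := funext hu
  refine ⟨continuousOn_const.add (continuousOn_const.mul hg.continuousOn_primitive_Ici),
    fun t ht => le_add_of_nonneg_right (mul_nonneg hc ?_), fun t ht => ?_,
    (hg.tendsto_primitive_atTop.const_mul c).const_add b⟩
  · exact intervalIntegral.integral_nonneg (μ := volume) ht fun s hs => hg_nonneg s hs.1
  · exact ((hg.hasDerivAt_primitive ht (hg_cont.continuousAt (Ici_mem_nhds ht))).const_mul
      c).const_add b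

theorem properties_of_eq_const_add_mul_setIntegral_Ici {v : ℝ → ℝ} (hg : IntegrableOn g (Ici a))
    (hg_cont : ContinuousOn g (Ici a)) (hg_nonneg : ∀ s ∈ Ici a, 0 ≤ g s) (hc : 0 ≤ c)
    (hv : ∀ t, v t = b + c * ∫ s in Ici t, g s) :
    ContinuousOn v (Ici a) ∧ (∀ t ∈ Ici a, b ≤ v t) ∧ (∀ t > a, HasDerivAt v (c * -g t) t) ∧
      Tendsto v atTop (𝓝 b) := by
  obtain rfl : v = fun t => b + c * ∫ s in Ici t, g s := funext hv
  refine ⟨continuousOn_const.add (continuousOn_const.mul hg.continuousOn_setIntegral_Ici),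
    fun t ht => le_add_of_nonneg_right (mul_nonneg hc ?_), fun t ht => ?_, ?_⟩
  · exact setIntegral_nonneg measurableSet_Ici fun s hs =>
      hg_nonneg s (mem_Ici.2 ((mem_Ici.1 ht).trans hs))
  · exact ((hg.hasDerivAt_setIntegral_Ici ht (hg_cont.continuousAt (Ici_mem_nhds ht))).const_mul
      c).const_add b
  · simpa using ((tendsto_integral_Ici_zero (f := g) (μ := volume) tendsto_id).const_mul
      c).const_add b

end AffinePrimitive

theorem stmt_15_general
    (p : ℝ → ℝ)
    (hp_cont : ContinuousOn p (Ici 0))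
    (hp_pos : ∀ t ∈ Ici (0:ℝ), 0 < p t)
    (hp_int : IntegrableOn (fun s => 1 / p s) (Ici 0))
    (a₁ a₂ b₁ b₂ D : ℝ)
    (ha₁ : 0 ≤ a₁) (ha₂ : 0 ≤ a₂)
    (hDpos : 0 < D)
    (θ φ : ℝ → ℝ)
    (hθ : ∀ t, θ t = b₁ + a₁ * ∫ σ in (0:ℝ)..t, 1 / p σ)
    (hφ : ∀ t, φ t = b₂ + a₂ * ∫ σ in Ici t, 1 / p σ)
    (G : ℝ → ℝ → ℝ)
    (hG : ∀ t s, G t s = (1 / D) * (θ (min t s) * φ (max t s)))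
    (hb₁' : 0 < b₁) (hb₂' : 0 < b₂)
    (q : ℝ → ℝ)
    (hq_cont : ContinuousOn q (Ici 0))
    (hq_int : IntegrableOn (fun s => G s s * p s * q s) (Ici 0))
    (x : ℝ → ℝ)
    (hx : ∀ t, x t = ∫ s in Ici (0:ℝ), G t s * p s * q s)
    :
    (∀ t > 0, HasDerivAt x
      ((1 / D * (a₁ * (∫ s in Ici t, φ s * p s * q s)
        - a₂ * ∫ s in (0:ℝ)..t, θ s * p s * q s)) / p t) t) ∧
    (∃ ℓ, Tendsto (fun t => 1 / D * (a₁ * (∫ s in Ici t, φ s * p s * q s)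
        - a₂ * ∫ s in (0:ℝ)..t, θ s * p s * q s)) (𝓝[>] (0:ℝ)) (𝓝 ℓ) ∧
      a₁ * x 0 - b₁ * ℓ = 0) ∧
    (∃ L ℓ, Tendsto x atTop (𝓝 L) ∧
      Tendsto (fun t => 1 / D * (a₁ * (∫ s in Ici t, φ s * p s * q s)
        - a₂ * ∫ s in (0:ℝ)..t, θ s * p s * q s)) atTop (𝓝 ℓ) ∧
      a₂ * L + b₂ * ℓ = 0)
    := by
  simp only [mul_assoc] at hx hq_int ⊢
  have hinv_cont : ContinuousOn (fun s => 1 / p s) (Ici 0) :=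
    continuousOn_const.div hp_cont fun t ht => (hp_pos t ht).ne'
  have hinv_nonneg : ∀ s ∈ Ici (0:ℝ), 0 ≤ 1 / p s := fun s hs => (one_div_pos.2 (hp_pos s hs)).le
  obtain ⟨hθ_cont, hθ_ge, hθ_deriv, hθ_lim⟩ :=
    properties_of_eq_const_add_mul_primitive hp_int hinv_cont hinv_nonneg ha₁ hθ
  obtain ⟨hφ_cont, hφ_ge, hφ_deriv, hφ_lim⟩ :=
    properties_of_eq_const_add_mul_setIntegral_Ici hp_int hinv_cont hinv_nonneg ha₂ hφ
  have hw : ContinuousOn (fun s => p s * q s) (Ici 0) := hp_cont.mul hq_cont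
  have hθφw : IntegrableOn (fun s => φ s * (θ s * (p s * q s))) (Ici 0) :=
    IntegrableOn.congr_fun (hq_int.const_mul D)
      (fun s _ => by rw [hG, min_self, max_self]; field_simp) measurableSet_Ici
  have hθw : IntegrableOn (fun s => θ s * (p s * q s)) (Ici 0) :=
    hθφw.of_mul_of_le measurableSet_Ici hb₂' (hθ_cont.mul hw) hφ_ge
  have hφw : IntegrableOn (fun s => φ s * (p s * q s)) (Ici 0) :=
    (hθφw.congr_fun (fun s _ => by ring) measurableSet_Ici).of_mul_of_le (g := θ)
      measurableSet_Ici hb₁' (hφ_cont.mul hw) hθ_ge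
  obtain rfl : x = fun t => 1 / D * ∫ s in Ici 0, θ (min t s) * φ (max t s) * (p s * q s) := by
    funext t
    rw [hx, ← integral_const_mul]
    simp only [hG, mul_assoc]
  refine ⟨fun t ht => ?_,
    ⟨_, (((hφw.tendsto_setIntegral_Ici_nhdsGT).const_mul a₁).sub
      ((hθw.tendsto_primitive_nhdsGT).const_mul a₂)).const_mul (1 / D), ?_⟩,
    ⟨_, _, (tendsto_integral_Ici_min_max_mul hθw hφw hθ_lim hφ_lim).const_mul (1 / D),
      (((tendsto_integral_Ici_zero tendsto_id).const_mul a₁).sub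
        (hθw.tendsto_primitive_atTop.const_mul a₂)).const_mul (1 / D), by ring⟩⟩
  · refine ((hasDerivAt_integral_Ici_min_max_mul hθw hφw ht (hθ_deriv t ht) (hφ_deriv t ht)
      (hw.continuousAt (Ici_mem_nhds ht))).const_mul (1 / D)).congr_deriv ?_
    ring
  · simp only [integral_Ici_min_max_mul hθw hφw le_rfl, hθ 0, intervalIntegral.integral_same]
    ring

theorem stmt_15
    (p : ℝ → ℝ)
    (hp_cont : ContinuousOn p (Ici 0))
    (hp_pos : ∀ t ∈ Ici (0:ℝ), 0 < p t)
    (hp_int : IntegrableOn (fun s => 1 / p s) (Ici 0))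
    (a₁ a₂ b₁ b₂ D : ℝ)
    (ha₁ : 0 ≤ a₁) (ha₂ : 0 ≤ a₂) (hb₁ : 0 ≤ b₁) (hb₂ : 0 ≤ b₂)
    (hD : D = a₂ * b₁ + a₁ * b₂ + a₁ * a₂ * ∫ σ in Ici (0:ℝ), 1 / p σ)
    (hDpos : 0 < D)
    (θ φ : ℝ → ℝ)
    (hθ : ∀ t, θ t = b₁ + a₁ * ∫ σ in (0:ℝ)..t, 1 / p σ)
    (hφ : ∀ t, φ t = b₂ + a₂ * ∫ σ in Ici t, 1 / p σ)
    (G : ℝ → ℝ → ℝ)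
    (hG : ∀ t s, G t s = (1 / D) * (θ (min t s) * φ (max t s)))
    (hb₁' : 0 < b₁) (hb₂' : 0 < b₂)
    (q : ℝ → ℝ)
    (hq_cont : ContinuousOn q (Ici 0))
    (hq_nonneg : ∀ s ∈ Ici (0:ℝ), 0 ≤ q s)
    (hq_int : IntegrableOn (fun s => G s s * p s * q s) (Ici 0))
    (x : ℝ → ℝ)
    (hx : ∀ t, x t = ∫ s in Ici (0:ℝ), G t s * p s * q s)
    :
    (∀ t > 0, HasDerivAt x
      ((1 / D * (a₁ * (∫ s in Ici t, φ s * p s * q s)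
        - a₂ * ∫ s in (0:ℝ)..t, θ s * p s * q s)) / p t) t) ∧
    (∃ ℓ, Tendsto (fun t => 1 / D * (a₁ * (∫ s in Ici t, φ s * p s * q s)
        - a₂ * ∫ s in (0:ℝ)..t, θ s * p s * q s)) (𝓝[>] (0:ℝ)) (𝓝 ℓ) ∧
      a₁ * x 0 - b₁ * ℓ = 0) ∧
    (∃ L ℓ, Tendsto x atTop (𝓝 L) ∧
      Tendsto (fun t => 1 / D * (a₁ * (∫ s in Ici t, φ s * p s * q s)
        - a₂ * ∫ s in (0:ℝ)..t, θ s * p s * q s)) atTop (𝓝 ℓ) ∧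
      a₂ * L + b₂ * ℓ = 0) :=
  stmt_15_general p hp_cont hp_pos hp_int a₁ a₂ b₁ b₂ D ha₁ ha₂ hDpos θ φ hθ hφ G hG hb₁' hb₂' q
    hq_cont hq_int x hx
end

section
/- The function t ↦ ∫₀^∞ G(t,s)·p(s)·k(s) ds is continuous on [0,∞), and it is bounded above by ∫₀^∞ G(s,s)·p(s)·k(s) ds. -/
/-!
Writing `f = 1 / p ≥ 0`, the factor `θ` is an increasing and `φ` a decreasing nonnegative
continuous function of `t ≥ 0`, so `G t s = θ (min t s) φ (max t s) / D ≤ θ s φ s / D = G s s`.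
Hence the integrand `G t s p(s) k(s)` is dominated by the integrable diagonal `G s s p(s) k(s)`,
uniformly in `t`, which gives both the bound and, by dominated convergence, the continuity.
-/

open MeasureTheory Set Filter Topology

section DominatedByDiagonal

variable {X : Type*} [MeasurableSpace X] {μ : Measure X} {S : Set X}
  {F : X → X → ℝ} {t : X}

theorem norm_le_diag_of_nonneg_of_le_diag (hF₀ : ∀ t ∈ S, ∀ s ∈ S, 0 ≤ F t s)
    (hF_le : ∀ t ∈ S, ∀ s ∈ S, F t s ≤ F s s) (hS : MeasurableSet S) (ht : t ∈ S) :
    ∀ᵐ s ∂μ.restrict S, ‖F t s‖ ≤ F s s :=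
  (ae_restrict_iff' hS).2 <| ae_of_all _ fun s hs => by
    rw [Real.norm_of_nonneg (hF₀ t ht s hs)]
    exact hF_le t ht s hs

theorem integrableOn_of_le_diag (hF₀ : ∀ t ∈ S, ∀ s ∈ S, 0 ≤ F t s)
    (hF_le : ∀ t ∈ S, ∀ s ∈ S, F t s ≤ F s s) (hS : MeasurableSet S)
    (hF_meas : AEStronglyMeasurable (F t) (μ.restrict S))
    (h_diag : IntegrableOn (fun s => F s s) S μ) (ht : t ∈ S) :
    IntegrableOn (F t) S μ :=
  h_diag.mono' hF_meas (norm_le_diag_of_nonneg_of_le_diag hF₀ hF_le hS ht)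

theorem setIntegral_le_setIntegral_diag (hF₀ : ∀ t ∈ S, ∀ s ∈ S, 0 ≤ F t s)
    (hF_le : ∀ t ∈ S, ∀ s ∈ S, F t s ≤ F s s) (hS : MeasurableSet S)
    (hF_meas : AEStronglyMeasurable (F t) (μ.restrict S))
    (h_diag : IntegrableOn (fun s => F s s) S μ) (ht : t ∈ S) :
    ∫ s in S, F t s ∂μ ≤ ∫ s in S, F s s ∂μ :=
  setIntegral_mono_on (integrableOn_of_le_diag hF₀ hF_le hS hF_meas h_diag ht) h_diag hS
    fun s hs => hF_le t ht s hs

theorem continuousOn_setIntegral_of_le_diag [TopologicalSpace X] [FirstCountableTopology X]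
    (hF₀ : ∀ t ∈ S, ∀ s ∈ S, 0 ≤ F t s)
    (hF_le : ∀ t ∈ S, ∀ s ∈ S, F t s ≤ F s s) (hS : MeasurableSet S)
    (hF_meas : ∀ t ∈ S, AEStronglyMeasurable (F t) (μ.restrict S))
    (h_diag : IntegrableOn (fun s => F s s) S μ)
    (hF_cont : ∀ s ∈ S, ContinuousOn (fun t => F t s) S) :
    ContinuousOn (fun t => ∫ s in S, F t s ∂μ) S :=
  continuousOn_of_dominated hF_meas
    (fun _ ht => norm_le_diag_of_nonneg_of_le_diag hF₀ hF_le hS ht) h_diag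
    ((ae_restrict_iff' hS).2 (ae_of_all _ hF_cont))

end DominatedByDiagonal

section IntegralsOverIci

variable {f : ℝ → ℝ} {a : ℝ}

theorem continuousOn_primitive_Ici (hf : IntegrableOn f (Ici a)) :
    ContinuousOn (fun t => ∫ x in a..t, f x) (Ici a) := by
  have h_eq : EqOn (fun t => ∫ x in a..t, (Ici a).indicator f x) (fun t => ∫ x in a..t, f x)
      (Ici a) := fun t ht =>
    intervalIntegral.integral_congr fun x hx =>
      indicator_of_mem (by rw [uIcc_of_le ht] at hx; exact hx.1) f
  exact (((integrable_indicator_iff measurableSet_Ici).2 hf).continuous_primitive a).continuousOn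
    |>.congr h_eq.symm

theorem monotoneOn_primitive_Ici (hf : IntegrableOn f (Ici a)) (hf₀ : ∀ x ∈ Ici a, 0 ≤ f x) :
    MonotoneOn (fun t => ∫ x in a..t, f x) (Ici a) := fun x hx y _ hxy => by
  simp only [intervalIntegral.integral_of_le hx, intervalIntegral.integral_of_le (hx.trans hxy)]
  exact setIntegral_mono_set (hf.mono_set fun _ hz => mem_Ici.2 hz.1.le)
    ((ae_restrict_iff' measurableSet_Ioc).2 (ae_of_all _ fun z hz => hf₀ z hz.1.le))
    (Ioc_subset_Ioc_right hxy).eventuallyLE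

theorem continuousOn_integral_Ici (hf : IntegrableOn f (Ici a)) :
    ContinuousOn (fun t => ∫ x in Ici t, f x) (Ici a) := by
  have h_eq : EqOn (fun t => (∫ x in Ici a, f x) - ∫ x in a..t, f x)
      (fun t => ∫ x in Ici t, f x) (Ici a) := fun t ht => by
    dsimp only
    rw [← intervalIntegral.integral_Ici_sub_Ici' hf (hf.mono_set (Ici_subset_Ici.2 ht)),
      sub_sub_cancel]
  exact (continuousOn_const.sub (continuousOn_primitive_Ici hf)).congr h_eq.symm

theorem antitoneOn_integral_Ici (hf : IntegrableOn f (Ici a)) (hf₀ : ∀ x ∈ Ici a, 0 ≤ f x) :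
    AntitoneOn (fun t => ∫ x in Ici t, f x) (Ici a) := fun _ hx _ _ hxy =>
  setIntegral_mono_set (hf.mono_set (Ici_subset_Ici.2 hx))
    ((ae_restrict_iff' measurableSet_Ici).2
      (ae_of_all _ fun z hz => hf₀ z (mem_Ici.2 (le_trans hx hz))))
    (Ici_subset_Ici.2 hxy).eventuallyLE

end IntegralsOverIci

section GreenKernel

variable {α : Type*} [LinearOrder α] {θ φ : α → ℝ} {S : Set α} {t s : α}

def greenKernel (θ φ : α → ℝ) (t s : α) : ℝ := θ (min t s) * φ (max t s)

theorem greenKernel_comm (θ φ : α → ℝ) (t s : α) : greenKernel θ φ t s = greenKernel θ φ s t := by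
  rw [greenKernel, greenKernel, min_comm, max_comm]

theorem greenKernel_nonneg (hθ₀ : ∀ x ∈ S, 0 ≤ θ x) (hφ₀ : ∀ x ∈ S, 0 ≤ φ x) (ht : t ∈ S)
    (hs : s ∈ S) : 0 ≤ greenKernel θ φ t s :=
  mul_nonneg (hθ₀ _ (min_rec' (· ∈ S) ht hs)) (hφ₀ _ (max_rec' (· ∈ S) ht hs))

theorem greenKernel_le_diag (hθ : MonotoneOn θ S) (hφ : AntitoneOn φ S) (hθ₀ : ∀ x ∈ S, 0 ≤ θ x)
    (hφ₀ : ∀ x ∈ S, 0 ≤ φ x) (ht : t ∈ S) (hs : s ∈ S) :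
    greenKernel θ φ t s ≤ greenKernel θ φ s s := by
  have h_min : min t s ∈ S := min_rec' (· ∈ S) ht hs
  have h_max : max t s ∈ S := max_rec' (· ∈ S) ht hs
  rw [greenKernel, greenKernel, min_self, max_self]
  exact mul_le_mul (hθ h_min hs (min_le_right t s)) (hφ hs h_max (le_max_right t s))
    (hφ₀ _ h_max) (hθ₀ s hs)

variable [TopologicalSpace α] [OrderClosedTopology α]

theorem continuousOn_greenKernel_left (hθ : ContinuousOn θ S) (hφ : ContinuousOn φ S)
    (hs : s ∈ S) : ContinuousOn (fun t => greenKernel θ φ t s) S :=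
  (hθ.comp (continuous_id.min continuous_const).continuousOn
      fun _ ht => min_rec' (· ∈ S) ht hs).mul
    (hφ.comp (continuous_id.max continuous_const).continuousOn
      fun _ ht => max_rec' (· ∈ S) ht hs)

theorem continuousOn_greenKernel_right (hθ : ContinuousOn θ S) (hφ : ContinuousOn φ S)
    (ht : t ∈ S) : ContinuousOn (greenKernel θ φ t) S :=
  (continuousOn_greenKernel_left hθ hφ ht).congr fun s _ => greenKernel_comm θ φ t s

theorem continuousOn_setIntegral_greenKernel_and_le_diag [MeasurableSpace α]
    [OpensMeasurableSpace α] [FirstCountableTopology α] {μ : Measure α} {w : α → ℝ} {c : ℝ} (hS : MeasurableSet S)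
    (hθ : MonotoneOn θ S) (hφ : AntitoneOn φ S) (hθ₀ : ∀ x ∈ S, 0 ≤ θ x) (hφ₀ : ∀ x ∈ S, 0 ≤ φ x)
    (hθ_cont : ContinuousOn θ S) (hφ_cont : ContinuousOn φ S) (hc : 0 ≤ c)
    (hw : ContinuousOn w S) (hw₀ : ∀ s ∈ S, 0 ≤ w s)
    (h_diag : IntegrableOn (fun s => c * (greenKernel θ φ s s * w s)) S μ) :
    ContinuousOn (fun t => ∫ s in S, c * (greenKernel θ φ t s * w s) ∂μ) S ∧
      ∀ t ∈ S, ∫ s in S, c * (greenKernel θ φ t s * w s) ∂μ ≤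
        ∫ s in S, c * (greenKernel θ φ s s * w s) ∂μ := by
  have hF₀ : ∀ t ∈ S, ∀ s ∈ S, 0 ≤ c * (greenKernel θ φ t s * w s) := fun t ht s hs =>
    mul_nonneg hc (mul_nonneg (greenKernel_nonneg hθ₀ hφ₀ ht hs) (hw₀ s hs))
  have hF_le : ∀ t ∈ S, ∀ s ∈ S,
      c * (greenKernel θ φ t s * w s) ≤ c * (greenKernel θ φ s s * w s) := fun t ht s hs =>
    mul_le_mul_of_nonneg_left
      (mul_le_mul_of_nonneg_right (greenKernel_le_diag hθ hφ hθ₀ hφ₀ ht hs) (hw₀ s hs)) hc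
  have hF_meas : ∀ t ∈ S,
      AEStronglyMeasurable (fun s => c * (greenKernel θ φ t s * w s)) (μ.restrict S) :=
    fun t ht => (continuousOn_const.mul ((continuousOn_greenKernel_right hθ_cont hφ_cont ht).mul
      hw)).aestronglyMeasurable hS
  have hF_cont : ∀ s ∈ S, ContinuousOn (fun t => c * (greenKernel θ φ t s * w s)) S :=
    fun s hs => continuousOn_const.mul
      ((continuousOn_greenKernel_left hθ_cont hφ_cont hs).mul continuousOn_const)
  exact ⟨continuousOn_setIntegral_of_le_diag hF₀ hF_le hS hF_meas h_diag hF_cont,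
    fun t ht => setIntegral_le_setIntegral_diag hF₀ hF_le hS (hF_meas t ht) h_diag ht⟩

end GreenKernel

theorem stmt_16_general
    (p : ℝ → ℝ)
    (hp_cont : ContinuousOn p (Ici 0))
    (hp_pos : ∀ t ∈ Ici (0:ℝ), 0 < p t)
    (hp_int : IntegrableOn (fun s => 1 / p s) (Ici 0))
    (a₁ a₂ b₁ b₂ D : ℝ)
    (ha₁ : 0 ≤ a₁) (ha₂ : 0 ≤ a₂) (hb₁ : 0 ≤ b₁) (hb₂ : 0 ≤ b₂)
    (hDpos : 0 < D)
    (θ φ : ℝ → ℝ)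
    (hθ : ∀ t, θ t = b₁ + a₁ * ∫ σ in (0:ℝ)..t, 1 / p σ)
    (hφ : ∀ t, φ t = b₂ + a₂ * ∫ σ in Ici t, 1 / p σ)
    (G : ℝ → ℝ → ℝ)
    (hG : ∀ t s, G t s = (1 / D) * (θ (min t s) * φ (max t s)))
    (k : ℝ → ℝ)
    (hk_cont : ContinuousOn k (Ici 0))
    (hk_nonneg : ∀ s ∈ Ici (0:ℝ), 0 ≤ k s)
    (hk_int : IntegrableOn (fun s => G s s * p s * k s) (Ici 0))
    :
    ContinuousOn (fun t => ∫ s in Ici (0:ℝ), G t s * p s * k s) (Ici 0) ∧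
    ∀ t ∈ Ici (0:ℝ), (∫ s in Ici (0:ℝ), G t s * p s * k s) ≤ ∫ s in Ici (0:ℝ), G s s * p s * k s
    := by
  have hf₀ : ∀ s ∈ Ici (0:ℝ), 0 ≤ 1 / p s := fun s hs => (one_div_pos.2 (hp_pos s hs)).le
  have hθ_eq : θ = fun t => b₁ + a₁ * ∫ σ in (0:ℝ)..t, 1 / p σ := funext hθ
  have hφ_eq : φ = fun t => b₂ + a₂ * ∫ σ in Ici t, 1 / p σ := funext hφ
  have hθ_mono : MonotoneOn θ (Ici 0) := hθ_eq ▸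
    ((monotone_mul_left_of_nonneg ha₁).const_add b₁).comp_monotoneOn
      (monotoneOn_primitive_Ici hp_int hf₀)
  have hφ_anti : AntitoneOn φ (Ici 0) := hφ_eq ▸
    ((monotone_mul_left_of_nonneg ha₂).const_add b₂).comp_antitoneOn
      (antitoneOn_integral_Ici hp_int hf₀)
  have hθ₀ : ∀ t ∈ Ici (0:ℝ), 0 ≤ θ t := fun t ht => by
    have := intervalIntegral.integral_nonneg (μ := volume) ht fun s hs => hf₀ s hs.1
    rw [hθ]; positivity
  have hφ₀ : ∀ t ∈ Ici (0:ℝ), 0 ≤ φ t := fun t ht => by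
    have := setIntegral_nonneg (μ := volume) measurableSet_Ici fun s hs => hf₀ s (ht.trans hs)
    rw [hφ]; positivity
  have hθ_cont : ContinuousOn θ (Ici 0) := hθ_eq ▸
    continuousOn_const.add (continuousOn_const.mul (continuousOn_primitive_Ici hp_int))
  have hφ_cont : ContinuousOn φ (Ici 0) := hφ_eq ▸
    continuousOn_const.add (continuousOn_const.mul (continuousOn_integral_Ici hp_int))
  have hG_eq : ∀ t s, G t s = 1 / D * greenKernel θ φ t s := hG
  have hw₀ : ∀ s ∈ Ici (0:ℝ), 0 ≤ p s * k s := fun s hs =>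
    mul_nonneg (hp_pos s hs).le (hk_nonneg s hs)
  simp only [hG_eq, mul_assoc] at hk_int ⊢
  exact continuousOn_setIntegral_greenKernel_and_le_diag measurableSet_Ici hθ_mono hφ_anti
    hθ₀ hφ₀ hθ_cont hφ_cont (one_div_nonneg.2 hDpos.le) (hp_cont.mul hk_cont) hw₀ hk_int

theorem stmt_16
    (p : ℝ → ℝ)
    (hp_cont : ContinuousOn p (Ici 0))
    (hp_pos : ∀ t ∈ Ici (0:ℝ), 0 < p t)
    (hp_int : IntegrableOn (fun s => 1 / p s) (Ici 0))
    (a₁ a₂ b₁ b₂ D : ℝ)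
    (ha₁ : 0 ≤ a₁) (ha₂ : 0 ≤ a₂) (hb₁ : 0 ≤ b₁) (hb₂ : 0 ≤ b₂)
    (hD : D = a₂ * b₁ + a₁ * b₂ + a₁ * a₂ * ∫ σ in Ici (0:ℝ), 1 / p σ)
    (hDpos : 0 < D)
    (θ φ : ℝ → ℝ)
    (hθ : ∀ t, θ t = b₁ + a₁ * ∫ σ in (0:ℝ)..t, 1 / p σ)
    (hφ : ∀ t, φ t = b₂ + a₂ * ∫ σ in Ici t, 1 / p σ)
    (G : ℝ → ℝ → ℝ)
    (hG : ∀ t s, G t s = (1 / D) * (θ (min t s) * φ (max t s)))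
    (k : ℝ → ℝ)
    (hk_cont : ContinuousOn k (Ici 0))
    (hk_nonneg : ∀ s ∈ Ici (0:ℝ), 0 ≤ k s)
    (hk_int : IntegrableOn (fun s => G s s * p s * k s) (Ici 0))
    (hk_pos : 0 < ∫ s in Ici (0:ℝ), G s s * p s * k s)
    :
    ContinuousOn (fun t => ∫ s in Ici (0:ℝ), G t s * p s * k s) (Ici 0) ∧
    ∀ t ∈ Ici (0:ℝ), (∫ s in Ici (0:ℝ), G t s * p s * k s) ≤ ∫ s in Ici (0:ℝ), G s s * p s * k s :=
  stmt_16_general p hp_cont hp_pos hp_int a₁ a₂ b₁ b₂ D ha₁ ha₂ hb₁ hb₂ hDpos θ φ hθ hφ G hG k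
    hk_cont hk_nonneg hk_int
end

section
/- The equiconvergence property holds: lim_{t→∞} ∫₀^∞ G(t,s)·p(s)·k(s) ds = ∫₀^∞ Ḡ(s)·p(s)·k(s) ds = (b₂/D)·∫₀^∞ θ(s)·p(s)·k(s) ds, where Ḡ(s) := lim_{t→∞} G(t,s) = (b₂/D)·θ(s). -/
/-!
For `t ≥ s` the Green's function factors as `G t s = θ s * φ t / D`, and `φ t → b₂` because
the tail `∫ σ in Ici t, 1 / p σ` of an integrable function vanishes; this gives the pointwise
limit. Since `θ` is nonnegative and increasing and `φ` is nonnegative and decreasing,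
`|G t s| ≤ G s s`, so the hypothesis on `∫ G s s * p s * k s` supplies a dominating function
and the limit passes under the integral by dominated convergence.
-/

open MeasureTheory Set Filter Topology

theorem tendsto_setIntegral_Ici_atTop_zero {E : Type*} [NormedAddCommGroup E] [NormedSpace ℝ E]
    {μ : Measure ℝ} {f : ℝ → E} {a : ℝ} (hf : IntegrableOn f (Ici a) μ) :
    Tendsto (fun t => ∫ x in Ici t, f x ∂μ) atTop (𝓝 0) := by
  have hempty : ⋂ t : ℝ, Ici t = ∅ :=
    iInter_eq_empty_iff.2 fun x => ⟨x + 1, by simp⟩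
  simpa [hempty] using tendsto_setIntegral_of_antitone (μ := μ) (fun _ => measurableSet_Ici)
    (fun _ _ h => Ici_subset_Ici.2 h) ⟨a, hf⟩

section NonnegIntegrand

variable {f : ℝ → ℝ} {a c : ℝ}

theorem monotoneOn_const_add_mul_intervalIntegral (hf : IntegrableOn f (Ici a))
    (hf0 : ∀ x ∈ Ici a, 0 ≤ f x) (hc : 0 ≤ c) (b : ℝ) :
    MonotoneOn (fun t => b + c * ∫ x in a..t, f x) (Ici a) := by
  intro u hu v hv huv
  dsimp only
  gcongr b + c * ?_
  refine intervalIntegral.integral_mono_interval le_rfl hu huv ?_ ?_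
  · exact (ae_restrict_mem measurableSet_Ioc).mono fun x hx => hf0 x (le_of_lt hx.1)
  · exact (intervalIntegrable_iff_integrableOn_Ioc_of_le hv).2
      (hf.mono_set fun x hx => le_of_lt hx.1)

theorem antitoneOn_const_add_mul_setIntegral_Ici (hf : IntegrableOn f (Ici a))
    (hf0 : ∀ x ∈ Ici a, 0 ≤ f x) (hc : 0 ≤ c) (b : ℝ) :
    AntitoneOn (fun t => b + c * ∫ x in Ici t, f x) (Ici a) := by
  intro u hu v _ huv
  dsimp only
  gcongr b + c * ?_
  refine setIntegral_mono_set (hf.mono_set (Ici_subset_Ici.2 hu)) ?_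
    (Ici_subset_Ici.2 huv).eventuallyLE
  exact (ae_restrict_mem measurableSet_Ici).mono fun x hx => hf0 x (Ici_subset_Ici.2 hu hx)

end NonnegIntegrand

section MinMaxKernel

variable {θ φ : ℝ → ℝ} {S : Set ℝ}

theorem tendsto_mul_min_max_atTop {c : ℝ} (hφ : Tendsto φ atTop (𝓝 c)) (s : ℝ) :
    Tendsto (fun t => θ (min t s) * φ (max t s)) atTop (𝓝 (θ s * c)) := by
  refine (hφ.const_mul (θ s)).congr' ?_
  filter_upwards [eventually_ge_atTop s] with t ht
  rw [min_eq_right ht, max_eq_left ht]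

theorem abs_mul_min_max_le (hθ : MonotoneOn θ S) (hθ0 : ∀ x ∈ S, 0 ≤ θ x)
    (hφ : AntitoneOn φ S) (hφ0 : ∀ x ∈ S, 0 ≤ φ x) {t s : ℝ} (ht : t ∈ S) (hs : s ∈ S) :
    |θ (min t s) * φ (max t s)| ≤ θ s * φ s := by
  have hmin : min t s ∈ S := by rcases min_choice t s with h | h <;> rw [h] <;> assumption
  have hmax : max t s ∈ S := by rcases max_choice t s with h | h <;> rw [h] <;> assumption
  rw [abs_of_nonneg (mul_nonneg (hθ0 _ hmin) (hφ0 _ hmax))]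
  exact mul_le_mul (hθ hmin hs (min_le_right t s)) (hφ hs hmax (le_max_right t s))
    (hφ0 _ hmax) (hθ0 s hs)

theorem aemeasurable_mul_min_max {μ : Measure ℝ} {a t : ℝ} (hθ : MonotoneOn θ (Ici a))
    (hφ : AntitoneOn φ (Ici a)) (ht : a ≤ t) :
    AEMeasurable (fun s => θ (min t s) * φ (max t s)) (μ.restrict (Ici a)) := by
  refine AEMeasurable.mul ?_ ?_
  · refine aemeasurable_restrict_of_monotoneOn measurableSet_Ici fun u hu v hv huv => ?_
    exact hθ (le_min ht hu) (le_min ht hv) (min_le_min_left t huv)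
  · refine aemeasurable_restrict_of_antitoneOn measurableSet_Ici fun u _ v _ huv => ?_
    exact hφ (le_trans ht (le_max_left t u)) (le_trans ht (le_max_left t v))
      (max_le_max_left t huv)

end MinMaxKernel

theorem tendsto_integral_of_abs_le_diag {α : Type*} [MeasurableSpace α] {μ : Measure α}
    {l : Filter α} [l.IsCountablyGenerated] {F : α → α → ℝ} {g w : α → ℝ}
    (hF_meas : ∀ᶠ t in l, AEStronglyMeasurable (F t) μ) (hw : AEStronglyMeasurable w μ)
    (hF_le : ∀ᶠ t in l, ∀ᵐ s ∂μ, |F t s| ≤ |F s s|)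
    (hint : Integrable (fun s => F s s * w s) μ)
    (hlim : ∀ᵐ s ∂μ, Tendsto (fun t => F t s) l (𝓝 (g s))) :
    Tendsto (fun t => ∫ s, F t s * w s ∂μ) l (𝓝 (∫ s, g s * w s ∂μ)) := by
  refine tendsto_integral_filter_of_dominated_convergence (fun s => ‖F s s * w s‖)
    (hF_meas.mono fun t h => h.mul hw) ?_ hint.norm (hlim.mono fun s hs => hs.mul_const (w s))
  refine hF_le.mono fun t h => h.mono fun s hs => ?_
  simp only [norm_mul, Real.norm_eq_abs]
  exact mul_le_mul_of_nonneg_right hs (abs_nonneg _)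

theorem stmt_17_general
    (p : ℝ → ℝ)
    (hp_cont : ContinuousOn p (Ici 0))
    (hp_pos : ∀ t ∈ Ici (0:ℝ), 0 < p t)
    (hp_int : IntegrableOn (fun s => 1 / p s) (Ici 0))
    (a₁ a₂ b₁ b₂ D : ℝ)
    (ha₁ : 0 ≤ a₁) (ha₂ : 0 ≤ a₂) (hb₁ : 0 ≤ b₁) (hb₂ : 0 ≤ b₂)
    (θ φ : ℝ → ℝ)
    (hθ : ∀ t, θ t = b₁ + a₁ * ∫ σ in (0:ℝ)..t, 1 / p σ)
    (hφ : ∀ t, φ t = b₂ + a₂ * ∫ σ in Ici t, 1 / p σ)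
    (G : ℝ → ℝ → ℝ)
    (hG : ∀ t s, G t s = (1 / D) * (θ (min t s) * φ (max t s)))
    (k : ℝ → ℝ)
    (hk_cont : ContinuousOn k (Ici 0))
    (hk_int : IntegrableOn (fun s => G s s * p s * k s) (Ici 0))
    :
    (∀ s ∈ Ici (0:ℝ), Tendsto (fun t => G t s) atTop (𝓝 (b₂ / D * θ s))) ∧
    Tendsto (fun t => ∫ s in Ici (0:ℝ), G t s * p s * k s) atTop
      (𝓝 (∫ s in Ici (0:ℝ), (b₂ / D * θ s) * p s * k s)) ∧
    (∫ s in Ici (0:ℝ), (b₂ / D * θ s) * p s * k s) = b₂ / D * ∫ s in Ici (0:ℝ), θ s * p s * k s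
    := by
  have hp_inv : ∀ σ ∈ Ici (0:ℝ), 0 ≤ 1 / p σ := fun σ hσ => one_div_nonneg.2 (hp_pos σ hσ).le
  have hθ_mono : MonotoneOn θ (Ici 0) := by
    simpa only [← funext hθ] using monotoneOn_const_add_mul_intervalIntegral hp_int hp_inv ha₁ b₁
  have hφ_anti : AntitoneOn φ (Ici 0) := by
    simpa only [← funext hφ] using antitoneOn_const_add_mul_setIntegral_Ici hp_int hp_inv ha₂ b₂
  have hθ0 : ∀ s ∈ Ici (0:ℝ), 0 ≤ θ s := fun s hs =>
    hb₁.trans ((by simp [hθ] : b₁ = θ 0).trans_le (hθ_mono self_mem_Ici hs hs))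
  have hφ0 : ∀ s ∈ Ici (0:ℝ), 0 ≤ φ s := fun s hs => by
    rw [hφ]
    exact add_nonneg hb₂ (mul_nonneg ha₂
      (setIntegral_nonneg measurableSet_Ici fun x hx => hp_inv x (Ici_subset_Ici.2 hs hx)))
  have hφ_lim : Tendsto φ atTop (𝓝 b₂) := by
    simpa [funext hφ] using
      ((tendsto_setIntegral_Ici_atTop_zero hp_int).const_mul a₂).const_add b₂
  have hG_lim : ∀ s, Tendsto (fun t => G t s) atTop (𝓝 (b₂ / D * θ s)) := fun s => by
    simp only [hG]
    convert (tendsto_mul_min_max_atTop (θ := θ) hφ_lim s).const_mul (1 / D) using 2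
    ring
  have hG_le : ∀ t ∈ Ici (0:ℝ), ∀ s ∈ Ici (0:ℝ), |G t s| ≤ |G s s| := fun t ht s hs => by
    rw [hG, hG, min_self, max_self, abs_mul, abs_mul (1 / D),
      abs_of_nonneg (mul_nonneg (hθ0 s hs) (hφ0 s hs))]
    exact mul_le_mul_of_nonneg_left (abs_mul_min_max_le hθ_mono hθ0 hφ_anti hφ0 ht hs)
      (abs_nonneg _)
  have hG_meas : ∀ t ∈ Ici (0:ℝ), AEStronglyMeasurable (G t) (volume.restrict (Ici 0)) :=
    fun t ht => by
      rw [funext (hG t)]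
      exact ((aemeasurable_mul_min_max hθ_mono hφ_anti ht).const_mul _).aestronglyMeasurable
  have hpk : AEStronglyMeasurable (fun s => p s * k s) (volume.restrict (Ici 0)) :=
    (hp_cont.mul hk_cont).aestronglyMeasurable measurableSet_Ici
  refine ⟨fun s _ => hG_lim s, ?_, by simp only [mul_assoc]; exact integral_const_mul _ _⟩
  simpa only [mul_assoc] using tendsto_integral_of_abs_le_diag
    ((eventually_ge_atTop 0).mono hG_meas) hpk
    ((eventually_ge_atTop 0).mono fun t ht =>
      (ae_restrict_mem measurableSet_Ici).mono fun s hs => hG_le t ht s hs)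
    (by simpa only [mul_assoc, IntegrableOn] using hk_int) (ae_of_all _ hG_lim)

theorem stmt_17
    (p : ℝ → ℝ)
    (hp_cont : ContinuousOn p (Ici 0))
    (hp_pos : ∀ t ∈ Ici (0:ℝ), 0 < p t)
    (hp_int : IntegrableOn (fun s => 1 / p s) (Ici 0))
    (a₁ a₂ b₁ b₂ D : ℝ)
    (ha₁ : 0 ≤ a₁) (ha₂ : 0 ≤ a₂) (hb₁ : 0 ≤ b₁) (hb₂ : 0 ≤ b₂)
    (hD : D = a₂ * b₁ + a₁ * b₂ + a₁ * a₂ * ∫ σ in Ici (0:ℝ), 1 / p σ)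
    (hDpos : 0 < D)
    (θ φ : ℝ → ℝ)
    (hθ : ∀ t, θ t = b₁ + a₁ * ∫ σ in (0:ℝ)..t, 1 / p σ)
    (hφ : ∀ t, φ t = b₂ + a₂ * ∫ σ in Ici t, 1 / p σ)
    (G : ℝ → ℝ → ℝ)
    (hG : ∀ t s, G t s = (1 / D) * (θ (min t s) * φ (max t s)))
    (k : ℝ → ℝ)
    (hk_cont : ContinuousOn k (Ici 0))
    (hk_nonneg : ∀ s ∈ Ici (0:ℝ), 0 ≤ k s)
    (hk_int : IntegrableOn (fun s => G s s * p s * k s) (Ici 0))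
    (hk_pos : 0 < ∫ s in Ici (0:ℝ), G s s * p s * k s)
    :
    (∀ s ∈ Ici (0:ℝ), Tendsto (fun t => G t s) atTop (𝓝 (b₂ / D * θ s))) ∧
    Tendsto (fun t => ∫ s in Ici (0:ℝ), G t s * p s * k s) atTop
      (𝓝 (∫ s in Ici (0:ℝ), (b₂ / D * θ s) * p s * k s)) ∧
    (∫ s in Ici (0:ℝ), (b₂ / D * θ s) * p s * k s) = b₂ / D * ∫ s in Ici (0:ℝ), θ s * p s * k s :=
  stmt_17_general p hp_cont hp_pos hp_int a₁ a₂ b₁ b₂ D ha₁ ha₂ hb₁ hb₂ θ φ hθ hφ G hG k hk_cont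
    hk_int
end
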